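/- Let (R,m) be a one-dimensional Noetherian reduced local ring with finitely generated integral closure S, and x a minimal reduction of m. Then the integral closure of m² satisfies ̄(m²) = m²S ∩ R = x²S ∩ R, and xR ∩ ̄(m²) = xm. -/

import Mathlib

/-!
Write `m` for the maximal ideal and `K` for the total ring of fractions. Since `R` is reduced of
dimension one and `m^(n+1) = x m^n`, the element `x` lies in no minimal prime, so it is a
nonzerodivisor and a unit of `K`. For `y ∈ m`, the fraction `y/x` stabilises the finitely generated
`R`-module `m^n`, which contains the unit `x^n`; by the determinant trick `y/x` is integral, hence
lies in `S`. Thus `mS = xS` and `m²S = x²S`.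

An element of `m²S ∩ R` is integral over `m²` by the determinant trick applied to multiplication
on the finite `R`-module `S`. Conversely, an equation of integral dependence of `y` over `m²`
becomes, after division by `x^(2n)`, one of `y/x²` over `S`; as `S` is normal, `y ∈ x²S`.
Finally, if `xr ∈ x²S` then `r ∈ xS ∩ R`, which is `m` because `S` is integral over `R`.
-/

open IsLocalRing

/-- The set of elements of `R` that are integral over an ideal `I`: `y` satisfies an equation
`y^n + a₁ y^(n-1) + ⋯ + aₙ = 0` with `aᵢ ∈ I^i`.  (This set is the integral closure `Ī` of the
ideal `I`.) -/
def idealIntCl {R : Type*} [CommRing R] (I : Ideal R) : Set R :=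
  {y | ∃ n : ℕ, 0 < n ∧ ∃ a : ℕ → R, (∀ i, 1 ≤ i → i ≤ n → a i ∈ I ^ i) ∧
    y ^ n + ∑ i ∈ Finset.Icc 1 n, a i * y ^ (n - i) = 0}

open Polynomial nonZeroDivisors

section IdealIntCl

variable {R : Type*} [CommRing R] {I : Ideal R}

theorem subset_idealIntCl : (I : Set R) ⊆ idealIntCl I := fun y hy =>
  ⟨1, one_pos, fun _ => -y, fun i hi hi' => by
    obtain rfl : i = 1 := le_antisymm hi' hi
    simpa using hy, by simp⟩

theorem map_mem_idealIntCl {S : Type*} [CommRing S] (f : R →+* S) {y : R}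
    (hy : y ∈ idealIntCl I) : f y ∈ idealIntCl (I.map f) := by
  obtain ⟨n, hn, a, ha, h⟩ := hy
  refine ⟨n, hn, fun i => f (a i), fun i hi hi' => ?_, ?_⟩
  · rw [← Ideal.map_pow]
    exact Ideal.mem_map_of_mem f (ha i hi hi')
  · simpa using congrArg f h

theorem mem_idealIntCl_of_monic [Nontrivial R] {p : R[X]} (hp : p.Monic)
    (hcoeff : ∀ k, p.coeff k ∈ I ^ (p.natDegree - k)) {y : R} (hy : p.eval y = 0) :
    y ∈ idealIntCl I := by
  set n := p.natDegree
  have hn : 0 < n := by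
    refine Nat.pos_of_ne_zero fun h => ?_
    rw [hp.natDegree_eq_zero.mp h, eval_one] at hy
    exact one_ne_zero hy
  refine ⟨n, hn, fun i => p.coeff (n - i), fun i _ hi => ?_, ?_⟩
  · simpa [Nat.sub_sub_self hi] using hcoeff (n - i)
  · rw [eval_eq_sum_range, Finset.sum_range_succ, hp.coeff_natDegree, one_mul, add_comm] at hy
    rwa [← Finset.Ico_add_one_right_eq_Icc,
      Finset.sum_Ico_reflect (fun k => p.coeff k * y ^ k) 1 le_rfl, Nat.add_sub_cancel,
      Nat.sub_self, ← Finset.range_eq_Ico]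

theorem mem_idealIntCl_of_algebraMap_mem_map [Nontrivial R] {S : Type*} [CommRing S]
    [Algebra R S] [FaithfulSMul R S] [Module.Finite R S] {y : R}
    (hy : algebraMap R S y ∈ I.map (algebraMap R S)) : y ∈ idealIntCl I := by
  have hrange : LinearMap.range (Algebra.lmul R S (algebraMap R S y)) ≤ I • ⊤ := by
    rintro _ ⟨t, rfl⟩
    rw [Ideal.smul_top_eq_map, Submodule.restrictScalars_mem]
    exact Ideal.mul_mem_right t _ hy
  obtain ⟨p, hp, -, hcoeff, hp0⟩ :=
    LinearMap.exists_monic_and_natDegree_eq_and_coeff_mem_pow_and_aeval_eq_zero R _ I hrange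
  refine mem_idealIntCl_of_monic hp hcoeff (FaithfulSMul.algebraMap_injective R S ?_)
  rw [Polynomial.aeval_algHom_apply, aeval_algebraMap_apply_eq_algebraMap_eval] at hp0
  simpa [Algebra.algebraMap_eq_smul_one] using congrArg (fun g : Module.End R S => g 1) hp0

end IdealIntCl

theorem isIntegral_of_pow_add_sum_eq_zero {A B : Type*} [CommRing A] [CommRing B] [Algebra A B]
    {n : ℕ} (b : ℕ → A) {z : B}
    (h : z ^ n + ∑ i ∈ Finset.Icc 1 n, algebraMap A B (b i) * z ^ (n - i) = 0) :
    IsIntegral A z := by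
  have hdeg : (∑ i ∈ Finset.Icc 1 n, C (b i) * X ^ (n - i)).degree < (n : WithBot ℕ) := by
    refine (degree_sum_le _ _).trans_lt ((Finset.sup_lt_iff (WithBot.bot_lt_coe n)).mpr ?_)
    intro i hi
    obtain ⟨hi1, hin⟩ := Finset.mem_Icc.mp hi
    refine (degree_C_mul_X_pow_le _ _).trans_lt ?_
    exact WithBot.coe_lt_coe.mpr (Nat.sub_lt (hi1.trans hin) hi1)
  refine ⟨X ^ n + ∑ i ∈ Finset.Icc 1 n, C (b i) * X ^ (n - i), monic_X_pow_add hdeg, ?_⟩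
  simpa [eval₂_finsetSum] using h

theorem isIntegral_of_mul_mem_of_isUnit {R K : Type*} [CommRing R] [CommRing K] [Algebra R K]
    {N : Submodule R K} (hN : N.FG) {v : K} (hv : v ∈ N) (hvu : IsUnit v) {z : K}
    (hz : ∀ w ∈ N, z * w ∈ N) : IsIntegral R z := by
  have : Module.Finite R N := Module.Finite.iff_fg.mpr hN
  let f : Module.End R N := (LinearMap.mulLeft R z).restrict hz
  obtain ⟨p, hp, hp0⟩ := LinearMap.exists_monic_and_aeval_eq_zero R f
  have haeval (q : R[X]) (w : N) : ((aeval f q w : N) : K) = aeval z q * w := by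
    induction q using Polynomial.induction_on generalizing w with
    | C a => simp [Algebra.smul_def]
    | add p q hp hq => simp [hp, hq, add_mul]
    | monomial n a h =>
      rw [pow_succ, ← mul_assoc, map_mul (aeval f), aeval_X, Module.End.mul_apply, h]
      simp [f, mul_assoc]
      rfl
  refine ⟨p, hp, ?_⟩
  rw [← aeval_def, ← hvu.mul_left_eq_zero, ← haeval p ⟨v, hv⟩, hp0]
  rfl

theorem mem_span_singleton_of_mem_idealIntCl {S K : Type*} [CommRing S] [CommRing K]
    [Algebra S K] [IsIntegrallyClosedIn S K] {c : S} (hc : IsUnit (algebraMap S K c)) {y : S}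
    (hy : y ∈ idealIntCl (Ideal.span {c})) : y ∈ Ideal.span {c} := by
  obtain ⟨n, -, a, ha, hy⟩ := hy
  have hs (i : ℕ) : ∃ s : S, i ∈ Finset.Icc 1 n → a i = c ^ i * s := by
    by_cases hi : i ∈ Finset.Icc 1 n
    · have hai := ha i (Finset.mem_Icc.mp hi).1 (Finset.mem_Icc.mp hi).2
      rw [Ideal.span_singleton_pow, Ideal.mem_span_singleton'] at hai
      obtain ⟨s, hs⟩ := hai
      exact ⟨s, fun _ => by rw [← hs, mul_comm]⟩
    · exact ⟨0, fun h => absurd h hi⟩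
  choose s hs using hs
  obtain ⟨u, hu⟩ := hc
  obtain ⟨z, hyz⟩ : ∃ z, algebraMap S K y = u * z := ⟨↑u⁻¹ * algebraMap S K y, by simp⟩
  have hscale : (u : K) ^ n * (z ^ n + ∑ i ∈ Finset.Icc 1 n, algebraMap S K (s i) * z ^ (n - i)) =
      algebraMap S K (y ^ n + ∑ i ∈ Finset.Icc 1 n, a i * y ^ (n - i)) := by
    rw [map_add, map_sum, mul_add, Finset.mul_sum, map_pow, hyz, mul_pow]
    refine congrArg₂ (· + ·) (by ring) (Finset.sum_congr rfl fun i hi => ?_)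
    rw [hs i hi, map_mul, map_mul, map_pow, map_pow, ← hu, hyz, mul_pow,
      ← pow_mul_pow_sub _ (Finset.mem_Icc.mp hi).2]
    ring
  rw [hy, map_zero, ← Units.val_pow_eq_pow_val, (u ^ n).mul_right_eq_zero] at hscale
  obtain ⟨t, ht⟩ :=
    IsIntegrallyClosedIn.isIntegral_iff.mp (isIntegral_of_pow_add_sum_eq_zero s hscale)
  refine Ideal.mem_span_singleton'.mpr ⟨t, IsIntegralClosure.algebraMap_injective S S K ?_⟩
  rw [map_mul, ht, hyz, ← hu, mul_comm]

theorem map_eq_span_singleton_of_pow_succ_eq {R S K : Type*} [CommRing R] [CommRing S]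
    [CommRing K] [Algebra R S] [Algebra R K] [Algebra S K] [IsScalarTower R S K]
    [IsIntegralClosure S R K]
    [IsNoetherianRing R] {I : Ideal R} {x : R}
    (hxI : x ∈ I) (hx : IsUnit (algebraMap R K x)) {n : ℕ}
    (hn : I ^ (n + 1) = Ideal.span {x} * I ^ n) :
    I.map (algebraMap R S) = Ideal.span {algebraMap R S x} := by
  refine le_antisymm (Ideal.map_le_iff_le_comap.mpr fun y hy => ?_)
    (Ideal.span_le.mpr (Set.singleton_subset_iff.mpr (Ideal.mem_map_of_mem _ hxI)))
  obtain ⟨u, hu⟩ := hx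
  obtain ⟨z, hyz⟩ : ∃ z, algebraMap R K y = u * z := ⟨↑u⁻¹ * algebraMap R K y, by simp⟩
  let N : Submodule R K := Submodule.map (Algebra.linearMap R K) (I ^ n)
  have hzN (w : K) (hw : w ∈ N) : z * w ∈ N := by
    obtain ⟨t, ht, rfl⟩ := hw
    have hyt : y * t ∈ Ideal.span {x} * I ^ n := hn ▸ pow_succ' I n ▸ Ideal.mul_mem_mul hy ht
    obtain ⟨t', ht', hxt⟩ := Ideal.mem_span_singleton_mul.mp hyt
    refine ⟨t', ht', (u.isUnit.mul_left_cancel ?_).symm⟩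
    simp only [Algebra.linearMap_apply]
    rw [← mul_assoc, ← hyz, hu, ← map_mul, ← map_mul, hxt]
  have hxnN : algebraMap R K (x ^ n) ∈ N := ⟨x ^ n, Ideal.pow_mem_pow hxI n, rfl⟩
  have hxnK : IsUnit (algebraMap R K (x ^ n)) := by
    rw [map_pow, ← hu]
    exact (u ^ n).isUnit
  obtain ⟨s, hs⟩ := (IsIntegralClosure.isIntegral_iff (A := S)).mp
    (isIntegral_of_mul_mem_of_isUnit ((IsNoetherian.noetherian _).map _) hxnN hxnK hzN)
  refine Ideal.mem_span_singleton'.mpr ⟨s, IsIntegralClosure.algebraMap_injective S R K ?_⟩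
  rw [map_mul, hs, ← IsScalarTower.algebraMap_apply, ← IsScalarTower.algebraMap_apply, hyz, ← hu,
    mul_comm]

theorem mem_nonZeroDivisors_of_forall_notMem_minimalPrimes {R : Type*} [CommRing R]
    [IsReduced R] {x : R} (h : ∀ q ∈ minimalPrimes R, x ∉ q) : x ∈ R⁰ := by
  rw [mem_nonZeroDivisors_iff_right]
  intro y hy
  have hnil : y ∈ nilradical R := by
    rw [nilradical, ← Ideal.sInf_minimalPrimes]
    exact Submodule.mem_sInf.mpr fun q hq =>
      (hq.1.1.mem_or_mem (hy ▸ q.zero_mem)).resolve_right (h q hq)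
  rwa [nilradical_eq_zero, Ideal.zero_eq_bot, Ideal.mem_bot] at hnil

namespace IsLocalRing

variable {R : Type*} [CommRing R] [IsLocalRing R]

theorem maximalIdeal_notMem_minimalPrimes (h : ringKrullDim R ≠ 0) :
    maximalIdeal R ∉ minimalPrimes R := fun hm => h <| by
  rw [← maximalIdeal_height_eq_ringKrullDim, Ideal.height_eq_zero_iff.mpr hm]
  rfl

theorem mem_nonZeroDivisors_of_maximalIdeal_le_radical [IsReduced R] (h : ringKrullDim R ≠ 0)
    {x : R} (hx : maximalIdeal R ≤ (Ideal.span {x}).radical) : x ∈ R⁰ := by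
  refine mem_nonZeroDivisors_of_forall_notMem_minimalPrimes fun q hq hxq => ?_
  have hmq : maximalIdeal R ≤ q :=
    hx.trans ((hq.1.1.radical_le_iff).mpr (Ideal.span_singleton_le_iff_mem q |>.mpr hxq))
  exact maximalIdeal_notMem_minimalPrimes h (le_maximalIdeal hq.1.1.ne_top |>.antisymm hmq ▸ hq)

theorem maximalIdeal_le_radical_of_pow_succ_eq {x : R} {n : ℕ}
    (hn : maximalIdeal R ^ (n + 1) = Ideal.span {x} * maximalIdeal R ^ n) :
    maximalIdeal R ≤ (Ideal.span {x}).radical := by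
  intro y hy
  have hyn : y ^ (n + 1) ∈ Ideal.span {x} * maximalIdeal R ^ n := by
    rw [← hn]
    exact Ideal.pow_mem_pow hy _
  exact ⟨n + 1, Ideal.mul_le_left hyn⟩

theorem mem_maximalIdeal_of_algebraMap_mem_span_singleton {S : Type*} [CommRing S] [Algebra R S]
    [IsLocalHom (algebraMap R S)] {x r : R} (hx : x ∈ maximalIdeal R)
    (hr : algebraMap R S r ∈ Ideal.span {algebraMap R S x}) : r ∈ maximalIdeal R := by
  refine le_maximalIdeal (J := (Ideal.span {algebraMap R S x}).comap (algebraMap R S))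
    (fun htop => hx ?_) hr
  rw [Ideal.comap_eq_top_iff, Ideal.span_singleton_eq_top] at htop
  exact isUnit_of_map_unit _ _ htop

theorem mem_span_singleton_mul_maximalIdeal_of_algebraMap_mem {S : Type*} [CommRing S]
    [Algebra R S] [IsLocalHom (algebraMap R S)] {x y : R} (hx : x ∈ maximalIdeal R)
    (hxS : algebraMap R S x ∈ S⁰) (hyx : y ∈ Ideal.span {x})
    (hy : algebraMap R S y ∈ Ideal.span {algebraMap R S x ^ 2}) :
    y ∈ Ideal.span {x} * maximalIdeal R := by
  obtain ⟨r, rfl⟩ := Ideal.mem_span_singleton'.mp hyx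
  obtain ⟨s, hs⟩ := Ideal.mem_span_singleton'.mp hy
  have hrs : algebraMap R S r = s * algebraMap R S x := by
    rw [← mul_cancel_right_mem_nonZeroDivisors hxS, ← map_mul, ← hs, mul_assoc, sq]
  have hr : r ∈ maximalIdeal R :=
    mem_maximalIdeal_of_algebraMap_mem_span_singleton hx
      (Ideal.mem_span_singleton'.mpr ⟨s, hrs.symm⟩)
  rw [mul_comm r x]
  exact Ideal.mul_mem_mul (Ideal.mem_span_singleton_self x) hr

end IsLocalRing

/-- Let `(R, m)` be a one-dimensional Noetherian reduced local ring with
finitely generated integral closure `S` (in the total ring of fractions), and `x` a minimal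
reduction of `m`.  Then the integral closure of `m²` satisfies
`̄(m²) = m²S ∩ R = x²S ∩ R`, and `xR ∩ ̄(m²) = xm`. -/
theorem stmt6 (R S : Type*) [CommRing R] [IsLocalRing R] [IsNoetherianRing R] [IsReduced R]
    (hdim : ringKrullDim R = 1)
    [CommRing S] [Algebra R S] [Algebra S (FractionRing R)]
    [IsScalarTower R S (FractionRing R)]
    [IsIntegralClosure S R (FractionRing R)]
    [Module.Finite R S]
    (x : R) (hx : x ∈ maximalIdeal R)
    (hred : ∃ n : ℕ, maximalIdeal R ^ (n + 1) = Ideal.span {x} * maximalIdeal R ^ n) :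
    idealIntCl (maximalIdeal R ^ 2)
        = {r : R | algebraMap R S r ∈ Ideal.map (algebraMap R S) (maximalIdeal R ^ 2)} ∧
    idealIntCl (maximalIdeal R ^ 2)
        = {r : R | algebraMap R S r ∈ Ideal.span {algebraMap R S x ^ 2}} ∧
    (↑(Ideal.span {x}) ∩ idealIntCl (maximalIdeal R ^ 2) : Set R)
        = ↑(Ideal.span {x} * maximalIdeal R) := by
  obtain ⟨n, hn⟩ := hred
  have : FaithfulSMul R S := .tower_bot R S (FractionRing R)
  have : Algebra.IsIntegral R S := IsIntegralClosure.isIntegral_algebra R (FractionRing R)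
  have : IsIntegrallyClosedIn S (FractionRing R) := .of_isIntegralClosure R
  have hxR : x ∈ R⁰ := mem_nonZeroDivisors_of_maximalIdeal_le_radical (by simp [hdim])
    (maximalIdeal_le_radical_of_pow_succ_eq hn)
  have hxK : IsUnit (algebraMap R (FractionRing R) x) := IsLocalization.map_units _ ⟨x, hxR⟩
  have hxS : IsUnit (algebraMap S (FractionRing R) (algebraMap R S x)) := by
    rwa [← IsScalarTower.algebraMap_apply]
  have hm2S : (maximalIdeal R ^ 2).map (algebraMap R S) = Ideal.span {algebraMap R S x ^ 2} := by
    rw [Ideal.map_pow, map_eq_span_singleton_of_pow_succ_eq hx hxK hn, Ideal.span_singleton_pow]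
  have hcl : idealIntCl (maximalIdeal R ^ 2) =
      {r : R | algebraMap R S r ∈ Ideal.span {algebraMap R S x ^ 2}} := by
    ext y
    refine ⟨fun hy => ?_, fun hy => mem_idealIntCl_of_algebraMap_mem_map (hm2S ▸ hy)⟩
    refine mem_span_singleton_of_mem_idealIntCl (K := FractionRing R) ?_
      (hm2S ▸ map_mem_idealIntCl _ hy)
    rw [map_pow]
    exact hxS.pow 2
  refine ⟨hm2S ▸ hcl, hcl, Set.ext fun y => ⟨fun ⟨hyx, hy⟩ => ?_, fun hy => ⟨?_, ?_⟩⟩⟩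
  · have hxS' : algebraMap R S x ∈ S⁰ := mem_nonZeroDivisors_of_injective
      (IsIntegralClosure.algebraMap_injective S R (FractionRing R)) hxS.mem_nonZeroDivisors
    rw [hcl] at hy
    exact mem_span_singleton_mul_maximalIdeal_of_algebraMap_mem hx hxS' hyx hy
  · exact Ideal.mul_le_left hy
  · refine subset_idealIntCl ?_
    rw [sq]
    exact Ideal.mul_mono_left ((Ideal.span_singleton_le_iff_mem _).mpr hx) hy
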